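/- Correctness of the orthogonal vector computation: given the triangular basis output (av_i, b_i) of Algorithm 1 with associated basis vectors β_i = 0^{i−1} ∥ (1−av_i) ∥ b_i, Algorithm 2 (for i from n down to 1: out[i] ← av_i + Σ_{j>i} out[j]·b_i[j] mod 2) produces a vector out ∈ (ZMod 2)^n orthogonal to every β_i, i.e., β_i · out = 0 for all i. -/

import Mathlib

/-- State of the triangular-basis algorithm (Algorithm 1). -/
structure AlgState (n m : ℕ) where
  x : Fin m → Fin n → ZMod 2
  used : Fin m → ZMod 2
  av : Fin n → ZMod 2
  b : Fin n → Fin n → ZMod 2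

/-- One iteration `(i, j)` of Algorithm 1:
`used_j += x_j[i] ∧ av_i`; `av_i += x_j[i] ∧ used_j`;
if `used_j` then `b_i[(i+1)..n] += x_j[(i+1)..n]`;
if `x_j[i]` then `x_j[(i+1)..n] += b_i[(i+1)..n]` (all mod 2). -/
def algStep {n m : ℕ} (i : Fin n) (j : Fin m) (s : AlgState n m) : AlgState n m :=
  let used' : ZMod 2 := s.used j + s.x j i * s.av i
  let av' : ZMod 2 := s.av i + s.x j i * used'
  let b' : Fin n → ZMod 2 := fun k => s.b i k + (if i < k then used' * s.x j k else 0)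
  let x' : Fin n → ZMod 2 := fun k => s.x j k + (if i < k then s.x j i * b' k else 0)
  { x := Function.update s.x j x'
    used := Function.update s.used j used'
    av := Function.update s.av i av'
    b := Function.update s.b i b' }

/-- Run a list of iterations in order. -/
def algRun {n m : ℕ} (L : List (Fin n × Fin m)) (s : AlgState n m) : AlgState n m :=
  L.foldl (fun s p => algStep p.1 p.2 s) s

/-- All iterations in the standard order: outer loop over `i`, inner loop over `j`. -/
def allIters (n m : ℕ) : List (Fin n × Fin m) :=
  (List.finRange n).flatMap fun i => (List.finRange m).map fun j => (i, j)

/-- Initial state: input vectors `x0`, `used = 0`, `av = 1`, `b = 0`. -/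
def initState {n m : ℕ} (x0 : Fin m → Fin n → ZMod 2) : AlgState n m :=
  { x := x0, used := fun _ => 0, av := fun _ => 1, b := fun _ _ => 0 }

/-- The triangular basis vectors `β_i = 0^{i-1} ∥ (1 - av_i) ∥ b_i[(i+1)..n]`. -/
def basisVec {n m : ℕ} (s : AlgState n m) : Fin n → Fin n → ZMod 2 :=
  fun i k => if k < i then 0 else if k = i then 1 - s.av i else s.b i k

/-!
Algorithm 1 maintains the invariant `av i * b i k = 0`: an index still marked available carries a
zero tail. Over `ZMod 2` this is all Algorithm 2 needs: writing `S = Σ_{k>i} b_i[k]·out[k]` and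
`a = av_i`, we have `β_i · out = (1 - a)(a + S) + S`, which vanishes when `a * S = 0`.

The invariant survives a step `(r, j)` provided column `j` satisfies `used j * x j i = 0` for
all `i ≥ r`; the step itself restores that property of column `j` for `i > r`, so it holds again
for `i ≥ r'` when the next row `r' > r` starts.
-/

namespace AlgState

variable {n m : ℕ}

def AvMulBZero (s : AlgState n m) : Prop :=
  ∀ i k, s.av i * s.b i k = 0

def UsedMulXZeroOn (s : AlgState n m) (j : Fin m) (S : Set (Fin n)) : Prop :=
  ∀ i ∈ S, s.used j * s.x j i = 0

theorem UsedMulXZeroOn.mono {s : AlgState n m} {j : Fin m} {S T : Set (Fin n)}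
    (h : s.UsedMulXZeroOn j S) (hTS : T ⊆ S) : s.UsedMulXZeroOn j T :=
  fun i hi => h i (hTS hi)

end AlgState

open AlgState

section Step

variable {n m : ℕ} {s : AlgState n m} {r : Fin n} {j : Fin m}

theorem avMulBZero_algStep (hs : s.AvMulBZero) (hj : s.UsedMulXZeroOn j (Set.Ici r)) :
    (algStep r j s).AvMulBZero := by
  intro i k
  rcases eq_or_ne i r with rfl | hi
  · -- `u, x, a, b, xk` stand for `used j, x j r, av r, b r k` and `x j k`, the last zeroed for `k ≤ r`.
    have key : ∀ u x a b xk : ZMod 2, u * x = 0 → u * xk = 0 → a * b = 0 →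
        (a + x * (u + x * a)) * (b + (u + x * a) * xk) = 0 := by decide
    have hxk : s.used j * (if i < k then s.x j k else 0) = 0 := by
      split_ifs with hik
      · exact hj k (Set.mem_Ici.2 hik.le)
      · exact mul_zero _
    simpa [algStep, mul_ite] using
      key _ _ _ _ _ (hj i Set.self_mem_Ici) hxk (hs i k)
  · simpa [algStep, hi] using hs i k

theorem usedMulXZeroOn_algStep_self (hs : s.AvMulBZero) (hj : s.UsedMulXZeroOn j (Set.Ici r)) :
    (algStep r j s).UsedMulXZeroOn j (Set.Ioi r) := by
  intro i hi
  have hri : r < i := hi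
  have key : ∀ u xr a bk xk : ZMod 2, u * xr = 0 → u * xk = 0 → a * bk = 0 →
      (u + xr * a) * (xk + xr * (bk + (u + xr * a) * xk)) = 0 := by decide
  simpa [algStep, hri] using
    key _ _ _ _ _ (hj r Set.self_mem_Ici) (hj i (Set.mem_Ici.2 hri.le)) (hs r i)

theorem usedMulXZeroOn_algStep_of_ne {j' : Fin m} {S : Set (Fin n)} (hj' : j' ≠ j) :
    (algStep r j s).UsedMulXZeroOn j' S ↔ s.UsedMulXZeroOn j' S := by
  simp [UsedMulXZeroOn, algStep, hj']

end Step

theorem algRun_append {n m : ℕ} (L₁ L₂ : List (Fin n × Fin m)) (s : AlgState n m) :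
    algRun (L₁ ++ L₂) s = algRun L₂ (algRun L₁ s) :=
  List.foldl_append

theorem algRun_row_invariant {n m : ℕ} (r : Fin n) :
    ∀ (L : List (Fin m)) (s : AlgState n m), L.Nodup → s.AvMulBZero →
      (∀ j, s.UsedMulXZeroOn j (Set.Ioi r)) → (∀ j ∈ L, s.UsedMulXZeroOn j (Set.Ici r)) →
      (algRun (L.map (r, ·)) s).AvMulBZero ∧
        ∀ j, (algRun (L.map (r, ·)) s).UsedMulXZeroOn j (Set.Ioi r)
  | [], s, _, hs, hIoi, _ => ⟨hs, hIoi⟩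
  | j :: L, s, hnd, hs, hIoi, hIci => by
    obtain ⟨hjL, hnd⟩ := List.nodup_cons.1 hnd
    have hj := hIci j List.mem_cons_self
    refine algRun_row_invariant r L _ hnd (avMulBZero_algStep hs hj) (fun j' => ?_)
      (fun j' hj' => ?_)
    · rcases eq_or_ne j' j with rfl | hne
      · exact usedMulXZeroOn_algStep_self hs hj
      · exact (usedMulXZeroOn_algStep_of_ne hne).2 (hIoi j')
    · have hne : j' ≠ j := fun h => hjL (h ▸ hj')
      exact (usedMulXZeroOn_algStep_of_ne hne).2 (hIci j' (List.mem_cons_of_mem _ hj'))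

theorem avMulBZero_algRun_rows {n m : ℕ} :
    ∀ (L : List (Fin n)) (s : AlgState n m), L.Pairwise (· < ·) → s.AvMulBZero →
      (∀ r ∈ L, ∀ j, s.UsedMulXZeroOn j (Set.Ici r)) →
      (algRun (L.flatMap fun r => (List.finRange m).map (r, ·)) s).AvMulBZero
  | [], _, _, hs, _ => hs
  | r :: L, s, hsort, hs, hIci => by
    obtain ⟨hrL, hsort⟩ := List.pairwise_cons.1 hsort
    obtain ⟨hs', hIoi⟩ := algRun_row_invariant r (List.finRange m) s (List.nodup_finRange m) hs
      (fun j => (hIci r List.mem_cons_self j).mono Set.Ioi_subset_Ici_self)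
      (fun j _ => hIci r List.mem_cons_self j)
    rw [List.flatMap_cons, algRun_append]
    exact avMulBZero_algRun_rows L _ hsort hs'
      fun r' hr' j => (hIoi j).mono (Set.Ici_subset_Ioi.2 (hrL r' hr'))

theorem avMulBZero_algRun_allIters {n m : ℕ} (x0 : Fin m → Fin n → ZMod 2) :
    (algRun (allIters n m) (initState x0)).AvMulBZero :=
  avMulBZero_algRun_rows _ _ (List.pairwise_lt_finRange n) (fun _ _ => by simp [initState])
    fun _ _ _ _ _ => by simp [initState]

theorem sum_basisVec_mul {n m : ℕ} (s : AlgState n m) (i : Fin n) (v : Fin n → ZMod 2) :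
    ∑ k, basisVec s i k * v k =
      (1 - s.av i) * v i + ∑ k ∈ Finset.univ.filter (fun k => i < k), s.b i k * v k := by
  have hsplit : ∀ k, basisVec s i k * v k =
      (if k = i then (1 - s.av i) * v k else 0) + (if i < k then s.b i k * v k else 0) := by
    intro k
    rcases lt_trichotomy k i with hki | rfl | hik
    · simp [basisVec, hki, hki.ne, hki.not_gt]
    · simp [basisVec]
    · simp [basisVec, hik, hik.ne', hik.not_gt]
  simp only [hsplit, Finset.sum_add_distrib, Finset.sum_ite_eq', Finset.mem_univ, if_true,
    Finset.sum_filter]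

/-- Correctness of the orthogonal-vector computation (Algorithm 2): on the output
`(av, b)` of Algorithm 1, the vector `out` defined by the downward recursion
`out[i] = av_i + Σ_{j>i} b_i[j]·out[j]` is orthogonal to every basis vector `β_i`. -/
theorem alg2_orthogonal {n m : ℕ} (x0 : Fin m → Fin n → ZMod 2)
    (out : Fin n → ZMod 2)
    (hout : ∀ i : Fin n,
      out i = (algRun (allIters n m) (initState x0)).av i +
        ∑ j ∈ Finset.univ.filter (fun j : Fin n => i < j),
          (algRun (allIters n m) (initState x0)).b i j * out j) :
    ∀ i : Fin n,
      ∑ k, basisVec (algRun (allIters n m) (initState x0)) i k * out k = 0 := by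
  intro i
  set s := algRun (allIters n m) (initState x0)
  set S := ∑ j ∈ Finset.univ.filter (fun j : Fin n => i < j), s.b i j * out j
  have hS : s.av i * S = 0 := by
    have hab : ∀ k, s.av i * s.b i k = 0 := avMulBZero_algRun_allIters x0 i
    simp only [S, Finset.mul_sum, ← mul_assoc, hab, zero_mul, Finset.sum_const_zero]
  have key : ∀ a S : ZMod 2, a * S = 0 → (1 - a) * (a + S) + S = 0 := by decide
  rw [sum_basisVec_mul, hout i]
  exact key _ _ hS
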